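/- Let F = F_{2^m} be a finite field of characteristic 2 and let g ∈ F[X] be a squarefree polynomial of degree t ≥ 1. In the rational function field F(X), set L_g = { A/g : A ∈ F[X], deg A < t } and L_{g²} = { B/g² : B ∈ F[X], deg B < 2t }. Then the image φ(L_g) = { u² : u ∈ L_g } of L_g under the Frobenius φ(u) = u² is an F-linear subspace of F(X), L_g ∩ φ(L_g) = {0}, and L_g + φ(L_g) = L_{g²}; in particular L_{g²} = L_g ⊕ φ(L_g). -/

import Mathlib

/-!
Over the common denominator `g²`, an element of `L_g + φ(L_g)` is `(A g + B²) / g²` with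
`deg A, deg B < t`, so everything is about the map `(A, B) ↦ A g + B²` into polynomials of
degree `< 2t`. If `A g = B²` with `deg B < deg g`, then `g ∣ B²`, hence `g ∣ B` as `g` is
squarefree, so `B = 0` and `A = 0`: this gives `L_g ∩ φ(L_g) = 0`, and, since the map is
additive in characteristic 2, its injectivity. Both sides have `|F|^{2t}` elements, so it is
onto. Finally `u ↦ u²` is semilinear over the Frobenius of `F`, which is onto because `F` is
finite, so `φ(L_g)` is an `F`-subspace.
-/

open Polynomial

namespace Polynomial

theorem degree_mul_lt_of_lt_of_natDegree_le {R : Type*} [Semiring R] {p q : R[X]} {m k : ℕ}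
    (hp : p.degree < m) (hq : q.natDegree ≤ k) : (p * q).degree < (m + k : ℕ) := by
  rw [Nat.cast_add]
  calc (p * q).degree ≤ p.degree + q.natDegree := degree_mul_le_of_le le_rfl degree_le_natDegree
    _ < m + k := WithBot.add_lt_add_of_lt_of_le (WithBot.natCast_ne_bot _) hp (by exact_mod_cast hq)

theorem degree_mul_add_sq_lt {R : Type*} [Semiring R] {g A B : R[X]} {n : ℕ}
    (hg : g.natDegree ≤ n) (hA : A.degree < n) (hB : B.degree < n) :
    (A * g + B ^ 2).degree < (2 * n : ℕ) := by
  rw [two_mul, sq]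
  exact (degree_add_le _ _).trans_lt <| max_lt (degree_mul_lt_of_lt_of_natDegree_le hA hg)
    (degree_mul_lt_of_lt_of_natDegree_le hB (natDegree_le_of_degree_le hB.le))

theorem natCard_degreeLT (R : Type*) [Semiring R] (n : ℕ) :
    Nat.card (degreeLT R n) = Nat.card R ^ n := by
  rw [Nat.card_congr (degreeLTEquiv R n).toEquiv, Nat.card_fun, Nat.card_fin]

section Field

variable {K : Type*} [Field K] {g A B : K[X]}

theorem eq_zero_of_mul_eq_sq_of_squarefree (hg : Squarefree g) (hB : B.degree < g.degree)
    (h : A * g = B ^ 2) : A = 0 ∧ B = 0 := by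
  have hgB : g ∣ B := hg.isRadical 2 B ⟨A, by rw [← h, mul_comm]⟩
  have hB0 : B = 0 := eq_zero_of_dvd_of_degree_lt hgB hB
  rw [hB0, zero_pow two_ne_zero, mul_eq_zero] at h
  exact ⟨h.resolve_right hg.ne_zero, hB0⟩

theorem eq_of_mul_add_sq_eq_of_squarefree [CharP K 2] {A' B' : K[X]} (hg : Squarefree g)
    (hB : B.degree < g.degree) (hB' : B'.degree < g.degree)
    (h : A * g + B ^ 2 = A' * g + B' ^ 2) : A = A' ∧ B = B' := by
  have h' : (A + A') * g = (B + B') ^ 2 :=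
    CharTwo.add_eq_zero.1 (by rw [CharTwo.add_sq, ← CharTwo.add_eq_zero.2 h]; ring)
  have hdeg : (B + B').degree < g.degree := (degree_add_le _ _).trans_lt (max_lt hB hB')
  obtain ⟨hA0, hB0⟩ := eq_zero_of_mul_eq_sq_of_squarefree hg hdeg h'
  exact ⟨CharTwo.add_eq_zero.1 hA0, CharTwo.add_eq_zero.1 hB0⟩

theorem exists_mul_add_sq_eq_of_squarefree [Finite K] [CharP K 2] {C : K[X]} (hg : Squarefree g)
    (hC : C.degree < (2 * g.natDegree : ℕ)) :
    ∃ A B : K[X], A.degree < g.natDegree ∧ B.degree < g.natDegree ∧ A * g + B ^ 2 = C := by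
  set n := g.natDegree
  have hgn : g.degree = n := degree_eq_natDegree hg.ne_zero
  let f : degreeLT K n × degreeLT K n → degreeLT K (2 * n) := fun p =>
    ⟨p.1 * g + p.2 ^ 2, mem_degreeLT.2 <|
      degree_mul_add_sq_lt le_rfl (mem_degreeLT.1 p.1.2) (mem_degreeLT.1 p.2.2)⟩
  have hf : f.Injective := by
    rintro ⟨⟨A, hA⟩, ⟨B, hB⟩⟩ ⟨⟨A', hA'⟩, ⟨B', hB'⟩⟩ h
    rw [mem_degreeLT, ← hgn] at hA hB hA' hB'
    obtain ⟨rfl, rfl⟩ := eq_of_mul_add_sq_eq_of_squarefree hg hB hB' (congrArg Subtype.val h)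
    rfl
  have : Finite (degreeLT K (2 * n)) := .of_equiv _ (degreeLTEquiv K (2 * n)).toEquiv.symm
  have hcard : Nat.card (degreeLT K (2 * n)) ≤ Nat.card (degreeLT K n × degreeLT K n) := by
    rw [Nat.card_prod, natCard_degreeLT, natCard_degreeLT, two_mul, pow_add]
  obtain ⟨⟨⟨A, hA⟩, ⟨B, hB⟩⟩, hAB⟩ :=
    (hf.bijective_of_nat_card_le hcard).2 ⟨C, mem_degreeLT.2 hC⟩
  exact ⟨A, B, mem_degreeLT.1 hA, mem_degreeLT.1 hB, congrArg Subtype.val hAB⟩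

end Field

end Polynomial

instance {R : Type*} [CommSemiring R] (p : ℕ) [ExpChar R p] [PerfectRing R p] :
    RingHomSurjective (frobenius R p) :=
  ⟨surjective_frobenius R p⟩

theorem Submodule.coe_map_frobenius {R S : Type*} [CommSemiring R] [CommSemiring S] [Algebra R S]
    (p : ℕ) [ExpChar R p] [ExpChar S p] [PerfectRing R p] (W : Submodule R S) :
    (W.map (LinearMap.frobenius R S p) : Set S) = {w | ∃ u ∈ W, w = u ^ p} := by
  ext w
  simp [LinearMap.frobenius_def, eq_comm]

section FracSpace

variable {F : Type*} [Field F]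

local notation "ι" => algebraMap F[X] (RatFunc F)

/-- `fracSpace g n = {A / g : deg A < n}`, so the paper's `L_g` is `fracSpace g (deg g)` and
`L_{g²}` is `fracSpace (g²) (2 deg g)`. -/
noncomputable def fracSpace (g : F[X]) (n : ℕ) : Submodule F (RatFunc F) :=
  (degreeLT F n).map ((ι g)⁻¹ • (IsScalarTower.toAlgHom F F[X] (RatFunc F)).toLinearMap)

theorem coe_fracSpace (g : F[X]) (n : ℕ) :
    (fracSpace g n : Set (RatFunc F)) = {u | ∃ A : F[X], A.degree < n ∧ u = ι A / ι g} := by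
  ext u
  simp [fracSpace, mem_degreeLT, div_eq_inv_mul, eq_comm]

theorem mem_fracSpace {g : F[X]} {n : ℕ} {u : RatFunc F} :
    u ∈ fracSpace g n ↔ ∃ A : F[X], A.degree < n ∧ u = ι A / ι g :=
  Set.ext_iff.1 (coe_fracSpace g n) u

theorem algebraMap_ne_zero_of_squarefree {g : F[X]} (hg : Squarefree g) : ι g ≠ 0 :=
  (map_ne_zero_iff _ (IsFractionRing.injective _ _)).2 hg.ne_zero

theorem fracSpace_inter_squares {g : F[X]} {n : ℕ} (hg : Squarefree g) (hn : n ≤ g.natDegree) :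
    (fracSpace g n : Set (RatFunc F)) ∩ {w | ∃ u ∈ fracSpace g n, w = u ^ 2} = {0} := by
  have hι := algebraMap_ne_zero_of_squarefree hg
  ext w
  simp only [Set.mem_inter_iff, SetLike.mem_coe, Set.mem_ofPred_eq, Set.mem_singleton_iff]
  constructor
  · rintro ⟨hw, u, hu, rfl⟩
    obtain ⟨A, -, hA⟩ := mem_fracSpace.1 hw
    obtain ⟨B, hB, rfl⟩ := mem_fracSpace.1 hu
    rw [div_pow, div_eq_div_iff (pow_ne_zero 2 hι) hι] at hA
    have hAB : A * g = B ^ 2 := IsFractionRing.injective F[X] (RatFunc F) <|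
      mul_right_cancel₀ hι (by rw [map_mul, map_pow]; linear_combination -hA)
    have hBg : B.degree < g.degree :=
      hB.trans_le ((WithBot.coe_le_coe.2 hn).trans (degree_eq_natDegree hg.ne_zero).ge)
    simp [(eq_zero_of_mul_eq_sq_of_squarefree hg hBg hAB).2]
  · rintro rfl
    exact ⟨zero_mem _, 0, zero_mem _, by simp⟩

theorem fracSpace_sup_map_frobenius [Finite F] [CharP F 2] {g : F[X]} (hg : Squarefree g) :
    fracSpace g g.natDegree ⊔
        (fracSpace g g.natDegree).map (LinearMap.frobenius F (RatFunc F) 2) =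
      fracSpace (g ^ 2) (2 * g.natDegree) := by
  have hι := algebraMap_ne_zero_of_squarefree hg
  have common_denom (A B : F[X]) :
      ι A / ι g + (ι B / ι g) ^ 2 = ι (A * g + B ^ 2) / ι (g ^ 2) := by
    rw [map_add, map_mul, map_pow, map_pow]
    field_simp
  ext w
  rw [Submodule.mem_sup, mem_fracSpace]
  constructor
  · rintro ⟨_, hy, _, ⟨u, hu, rfl⟩, rfl⟩
    obtain ⟨A, hA, rfl⟩ := mem_fracSpace.1 hy
    obtain ⟨B, hB, rfl⟩ := mem_fracSpace.1 hu
    exact ⟨A * g + B ^ 2, degree_mul_add_sq_lt le_rfl hA hB, common_denom A B⟩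
  · rintro ⟨C, hC, rfl⟩
    obtain ⟨A, B, hA, hB, rfl⟩ := exists_mul_add_sq_eq_of_squarefree hg hC
    exact ⟨_, mem_fracSpace.2 ⟨A, hA, rfl⟩, _,
      Submodule.mem_map_of_mem (mem_fracSpace.2 ⟨B, hB, rfl⟩), common_denom A B⟩

end FracSpace

theorem syzygy_distinguisher_stmt0
    (F : Type) [Field F] [Fintype F] (hchar : ringChar F = 2)
    (g : Polynomial F) (t : ℕ) (hdeg : g.natDegree = t)
    (hsqfr : Squarefree g)
    (Lg : Set (RatFunc F))
    (hLg : Lg = {u | ∃ A : Polynomial F, A.degree < (t : ℕ) ∧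
      u = algebraMap (Polynomial F) (RatFunc F) A / algebraMap (Polynomial F) (RatFunc F) g})
    (Lg2 : Set (RatFunc F))
    (hLg2 : Lg2 = {u | ∃ B : Polynomial F, B.degree < (2 * t : ℕ) ∧
      u = algebraMap (Polynomial F) (RatFunc F) B / algebraMap (Polynomial F) (RatFunc F) (g ^ 2)})
    (phiLg : Set (RatFunc F)) (hphiLg : phiLg = {w | ∃ u ∈ Lg, w = u ^ 2}) :
    (∃ W : Submodule F (RatFunc F), (W : Set (RatFunc F)) = phiLg)
    ∧ Lg ∩ phiLg = {0}
    ∧ {w | ∃ a ∈ Lg, ∃ b ∈ phiLg, w = a + b} = Lg2 := by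
  have : CharP F 2 := ringChar.of_eq hchar
  subst hdeg
  rw [← coe_fracSpace] at hLg hLg2
  have hphi : phiLg = (fracSpace g g.natDegree).map (LinearMap.frobenius F (RatFunc F) 2) := by
    rw [hphiLg, hLg, Submodule.coe_map_frobenius]
    rfl
  subst hLg hLg2
  refine ⟨⟨_, hphi.symm⟩, hphiLg ▸ fracSpace_inter_squares hsqfr le_rfl, ?_⟩
  rw [hphi, ← fracSpace_sup_map_frobenius hsqfr, Submodule.coe_sup]
  ext w
  simp [Set.mem_add, eq_comm]
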